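/- Let g ⊆ V × V be an edge set of a finite directed graph on vertex set V, let S ⊆ V, let w ∈ V, and let e = ⟨u, v⟩ be an edge with u ∈ S. Then the reverse reachable set of w after adding e intersects S if and only if either the reverse reachable set of w in g already intersects S, or v ∈ RR(w, g); i.e., S ∩ RR(w, g ∪ {e}) ≠ ∅ ⇔ (S ∩ RR(w, g) ≠ ∅) ∨ (v ∈ RR(w, g)). -/

import Mathlib

open scoped Classical

noncomputable section

/-- The set of nodes reachable from some node of `S` via edges of `g`
(every node reaches itself). -/
def Reach {V : Type*} (S : Finset V) (g : Finset (V × V)) : Set V :=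
  {x | ∃ s ∈ S, Relation.ReflTransGen (fun a b => (a, b) ∈ g) s x}

/-- The reverse reachable set of `w` in `g`: all nodes `x` such that `w ∈ Reach({x}, g)`. -/
def RR {V : Type*} (w : V) (g : Finset (V × V)) : Set V :=
  {x | w ∈ Reach {x} g}

/-! A path to `w` that uses the new edge `u → v` ends with a path in `g` from `v` to `w`
(cut it after the last use of the edge); conversely, if `v` reaches `w` in `g`,
then `u ∈ S` reaches `w` through the new edge. -/

open Relation

theorem Relation.ReflTransGen.of_adjoin_edge {α : Type*} {r : α → α → Prop} {u v x w : α}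
    (h : ReflTransGen (fun a b => r a b ∨ a = u ∧ b = v) x w) :
    ReflTransGen r x w ∨ ReflTransGen r v w := by
  induction h using ReflTransGen.head_induction_on with
  | refl => exact Or.inl .refl
  | head hab _ ih =>
    rcases hab with hab | ⟨-, rfl⟩
    · exact ih.imp_left (ReflTransGen.head hab)
    · exact Or.inr (ih.elim id id)

theorem mem_RR_iff {V : Type*} {w x : V} {g : Finset (V × V)} :
    x ∈ RR w g ↔ ReflTransGen (fun a b => (a, b) ∈ g) x w := by
  simp [RR, Reach]

theorem mem_union_singleton_edge {V : Type*} [DecidableEq V] {g : Finset (V × V)} {u v a b : V} :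
    (a, b) ∈ g ∪ {(u, v)} ↔ (a, b) ∈ g ∨ a = u ∧ b = v := by
  simp [or_comm]

theorem rr_update_condition_general {V : Type*} [DecidableEq V]
    (g : Finset (V × V)) (S : Finset V) (w : V) (u v : V) (hu : u ∈ S) :
    ((S : Set V) ∩ RR w (g ∪ {(u, v)})).Nonempty ↔
      ((S : Set V) ∩ RR w g).Nonempty ∨ v ∈ RR w g := by
  simp only [Set.Nonempty, Set.mem_inter_iff, Finset.mem_coe, mem_RR_iff,
    mem_union_singleton_edge]
  have lift {x y : V} (h : ReflTransGen (fun a b => (a, b) ∈ g) x y) :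
      ReflTransGen (fun a b => (a, b) ∈ g ∨ a = u ∧ b = v) x y :=
    ReflTransGen.mono (fun _ _ => Or.inl) _ _ h
  constructor
  · rintro ⟨x, hxS, hx⟩
    exact hx.of_adjoin_edge.imp_left fun h => ⟨x, hxS, h⟩
  · rintro (⟨x, hxS, hx⟩ | hv)
    · exact ⟨x, hxS, lift hx⟩
    · exact ⟨u, hu, ReflTransGen.head (Or.inr ⟨rfl, rfl⟩) (lift hv)⟩

/-- For `e = ⟨u,v⟩` with `u ∈ S`, the RR set of `w` after adding `e` intersects `S` iff
either `RR(w, g)` already intersects `S`, or `v ∈ RR(w, g)`. -/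
theorem rr_update_condition {V : Type*} [Fintype V] [DecidableEq V]
    (g : Finset (V × V)) (S : Finset V) (w : V) (u v : V) (hu : u ∈ S) :
    ((S : Set V) ∩ RR w (g ∪ {(u, v)})).Nonempty ↔
      ((S : Set V) ∩ RR w g).Nonempty ∨ v ∈ RR w g :=
  rr_update_condition_general g S w u v hu
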